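/- Let S be a semi-Markovian causal model (SMCM) over a finite vertex set V and let M be the corresponding graph of S. Then M is a maximal ancestral graph (MAG), and for all pairwise disjoint subsets X, Y, Z of V with X, Y nonempty, X and Y are m-separated by Z in M if and only if X and Y are m-separated by Z in S. -/

import Mathlib

/-- The kind of an edge as traversed from left to right along a path:
forward directed (`a → b`), backward directed (`a ← b`), or bidirected (`a ↔ b`). -/
inductive EKind : Type
  | fwd | bwd | bi
deriving DecidableEq, Inhabited

/-- The edge kind has an arrowhead at its left endpoint. -/
def EKind.arrowLeft : EKind → Prop
  | .fwd => False
  | .bwd => True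
  | .bi  => True

/-- The edge kind has an arrowhead at its right endpoint. -/
def EKind.arrowRight : EKind → Prop
  | .fwd => True
  | .bwd => False
  | .bi  => True

/-- A mixed graph over a vertex type `V`: a set of directed edges and a set of
bidirected edges between distinct vertices. -/
structure MGraph (V : Type) where
  dir : V → V → Prop
  bidir : V → V → Prop
  dir_irrefl : ∀ x, ¬ dir x x
  bidir_irrefl : ∀ x, ¬ bidir x x
  bidir_symm : ∀ x y, bidir x y → bidir y x

namespace MGraph

variable {V : Type}

/-- There is an edge of the given kind (read left-to-right) between `a` and `b`. -/
def edgeKind (G : MGraph V) : EKind → V → V → Prop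
  | .fwd, a, b => G.dir a b
  | .bwd, a, b => G.dir b a
  | .bi,  a, b => G.bidir a b

/-- `x` is an ancestor of `y`: `x = y` or there is a directed path from `x` to `y`. -/
def Ancestor (G : MGraph V) : V → V → Prop := Relation.ReflTransGen G.dir

/-- The graph has no directed cycle. -/
def Acyclic (G : MGraph V) : Prop := ∀ x y, G.Ancestor x y → G.Ancestor y x → x = y

/-- `x` and `y` are adjacent: some edge joins them. -/
def Adj (G : MGraph V) (x y : V) : Prop := G.dir x y ∨ G.dir y x ∨ G.bidir x y

/-- A path between `x` and `y`: a sequence of distinct vertices starting at `x` and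
ending at `y`, together with, for each consecutive pair, an edge of the graph between
them (recorded by its kind). -/
structure Path (G : MGraph V) (x y : V) : Type where
  verts : List V
  kinds : List EKind
  len_eq : verts.length = kinds.length + 1
  nodup : verts.Nodup
  head_eq : verts.head? = some x
  last_eq : verts.getLast? = some y
  valid : ∀ i, i < kinds.length →
    G.edgeKind (kinds.getD i .fwd) (verts.getD i x) (verts.getD (i + 1) x)

namespace Path

variable {G : MGraph V} {x y : V}

/-- The `i`-th vertex on the path. -/
def vert (p : G.Path x y) (i : ℕ) : V := p.verts.getD i x

/-- The kind of the `i`-th edge on the path. -/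
def kind (p : G.Path x y) (i : ℕ) : EKind := p.kinds.getD i .fwd

/-- The (non-endpoint) vertex at position `i` is a collider on the path: both incident
edges have an arrowhead at it. -/
def ColliderAt (p : G.Path x y) (i : ℕ) : Prop :=
  1 ≤ i ∧ i + 1 < p.verts.length ∧
    (p.kind (i - 1)).arrowRight ∧ (p.kind i).arrowLeft

/-- The path is m-connecting given `Z`: every non-collider on it is not in `Z` and
every collider on it has a descendant in `Z`. -/
def MConn (p : G.Path x y) (Z : Set V) : Prop :=
  ∀ i, 1 ≤ i → i + 1 < p.verts.length →
    (p.ColliderAt i → ∃ d ∈ Z, G.Ancestor (p.vert i) d) ∧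
    (¬ p.ColliderAt i → p.vert i ∉ Z)

/-- The path is an inducing path: every non-endpoint vertex is a collider on the path
and an ancestor of one of the endpoints. -/
def Inducing (p : G.Path x y) : Prop :=
  ∀ i, 1 ≤ i → i + 1 < p.verts.length →
    p.ColliderAt i ∧ (G.Ancestor (p.vert i) x ∨ G.Ancestor (p.vert i) y)

end Path

/-- Distinct vertices `x, y ∉ Z` are m-separated by `Z`: no path between them is
m-connecting given `Z`. -/
def MSep (G : MGraph V) (x y : V) (Z : Set V) : Prop :=
  x ≠ y ∧ x ∉ Z ∧ y ∉ Z ∧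
    (∀ p : G.Path x y, ¬ p.MConn Z) ∧ (∀ p : G.Path y x, ¬ p.MConn Z)

/-- Sets `A` and `B` are m-separated by `C`: every `a ∈ A` and `b ∈ B` are. -/
def MSepSets (G : MGraph V) (A B C : Set V) : Prop :=
  ∀ a ∈ A, ∀ b ∈ B, G.MSep a b C

/-- `x` and `y` are virtually adjacent: there is an inducing path between them. -/
def VAdj (G : MGraph V) (x y : V) : Prop :=
  x ≠ y ∧ ((∃ p : G.Path x y, p.Inducing) ∨ (∃ p : G.Path y x, p.Inducing))

/-- The graph `M` corresponding to an SMCM `S`: distinct `x, y` are adjacent in `M`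
iff there is an inducing path between them in `S`, with the edge oriented `x → y` if
`x` is an ancestor of `y` in `S`, `y → x` if `y` is an ancestor of `x` in `S`, and
`x ↔ y` otherwise. -/
def mag (S : MGraph V) : MGraph V where
  dir x y := S.VAdj x y ∧ S.Ancestor x y
  bidir x y := S.VAdj x y ∧ ¬ S.Ancestor x y ∧ ¬ S.Ancestor y x
  dir_irrefl := fun x h => h.1.1 rfl
  bidir_irrefl := fun x h => h.1.1 rfl
  bidir_symm := fun _ _ h => ⟨⟨h.1.1.symm, h.1.2.symm⟩, h.2.2, h.2.1⟩

/-- An ancestral graph: at most one edge between any two vertices, and whenever `x`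
is an ancestor of `y`, no edge between `x` and `y` has an arrowhead at `x`. -/
def Ancestral (G : MGraph V) : Prop :=
  (∀ x y, G.Ancestor x y → x ≠ y → ¬ G.dir y x ∧ ¬ G.bidir x y) ∧
  (∀ x y, ¬ (G.dir x y ∧ G.bidir x y))

/-- A maximal ancestral graph: an ancestral graph in which every pair of non-adjacent
vertices is m-separated by some subset of the remaining vertices. -/
def IsMAG (G : MGraph V) : Prop :=
  G.Ancestral ∧ ∀ x y : V, x ≠ y → ¬ G.Adj x y →
    ∃ Z : Set V, x ∉ Z ∧ y ∉ Z ∧ G.MSep x y Z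

/-- The number of edges of a mixed graph (directed edges plus bidirected edges, the
latter counted as unordered pairs). -/
noncomputable def numEdges (G : MGraph V) : ℕ :=
  {p : V × V | G.dir p.1 p.2}.ncard +
    {e : Sym2 V | ∃ a b, e = s(a, b) ∧ G.bidir a b}.ncard

/-- The number of virtual adjacencies (unordered pairs of virtually adjacent
vertices). -/
noncomputable def numVAdj (G : MGraph V) : ℕ :=
  {e : Sym2 V | ∃ a b, e = s(a, b) ∧ G.VAdj a b}.ncard

/-- The number of m-separation statements entailed by the graph: triples `(X, Y, Z)`
of pairwise disjoint subsets with `X, Y` nonempty such that `X` and `Y` are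
m-separated by `Z`. -/
noncomputable def numSep (G : MGraph V) : ℕ :=
  {t : Set V × Set V × Set V | t.1.Nonempty ∧ t.2.1.Nonempty ∧
    Disjoint t.1 t.2.1 ∧ Disjoint t.1 t.2.2 ∧ Disjoint t.2.1 t.2.2 ∧
    G.MSepSets t.1 t.2.1 t.2.2}.ncard

/-- An unshielded triple `⟨a, z, b⟩`: `a, z` adjacent, `z, b` adjacent, `a, b` not
adjacent. -/
def UnshieldedTriple (G : MGraph V) (a z b : V) : Prop :=
  a ≠ z ∧ z ≠ b ∧ a ≠ b ∧ G.Adj a z ∧ G.Adj z b ∧ ¬ G.Adj a b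

/-- Some edge between `a` and `z` has an arrowhead at `z`. -/
def ArrowAt (G : MGraph V) (a z : V) : Prop := G.dir a z ∨ G.bidir a z

/-- An unshielded collider: an unshielded triple whose two edges both have arrowheads
at the middle vertex. -/
def UnshieldedCollider (G : MGraph V) (a z b : V) : Prop :=
  G.UnshieldedTriple a z b ∧ G.ArrowAt a z ∧ G.ArrowAt b z

/-- A discriminating path for `⟨X, Z, Y⟩`: a path `(V₀, V₁, ..., Vₘ = X, Z, Y)` with
`m ≥ 1` such that `V₀` and `Y` are not adjacent and every `Vᵢ` with `1 ≤ i ≤ m` is a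
collider on the path and a parent of `Y`. -/
def IsDiscriminating (G : MGraph V) {v₀ w : V} (p : G.Path v₀ w) (X Z Y : V) : Prop :=
  4 ≤ p.verts.length ∧ w = Y ∧
  p.vert (p.verts.length - 3) = X ∧
  p.vert (p.verts.length - 2) = Z ∧
  v₀ ≠ Y ∧ ¬ G.Adj v₀ Y ∧
  ∀ i, 1 ≤ i → i ≤ p.verts.length - 3 → p.ColliderAt i ∧ G.dir (p.vert i) Y

end MGraph

/-- An independence model over `V`: a set of triples `(X, Y, Z)` of pairwise disjoint
subsets of `V` with `X, Y` nonempty. -/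
def IsIndepModel {V : Type} (I : Set (Set V × Set V × Set V)) : Prop :=
  ∀ t ∈ I, t.1.Nonempty ∧ t.2.1.Nonempty ∧
    Disjoint t.1 t.2.1 ∧ Disjoint t.1 t.2.2 ∧ Disjoint t.2.1 t.2.2

/-- `G` satisfies the Markov assumption with `I`: every triple `(X, Y, Z)` such that
`X` and `Y` are m-separated by `Z` in `G` belongs to `I`. -/
def Markov {V : Type} (G : MGraph V) (I : Set (Set V × Set V × Set V)) : Prop :=
  ∀ X Y Z : Set V, X.Nonempty → Y.Nonempty →
    Disjoint X Y → Disjoint X Z → Disjoint Y Z →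
    G.MSepSets X Y Z → (X, Y, Z) ∈ I

/-- `G` satisfies the Faithfulness assumption with `I`: every triple in `I` is
m-separated in `G`. -/
def Faithful {V : Type} (G : MGraph V) (I : Set (Set V × Set V × Set V)) : Prop :=
  ∀ X Y Z : Set V, (X, Y, Z) ∈ I → G.MSepSets X Y Z

/-- `G` satisfies the Adjacency-faithfulness assumption with `I`: for adjacent
distinct `x, y` and any `Z ⊆ V ∖ {x, y}`, the triple `({x}, {y}, Z)` is not in `I`. -/
def AdjFaithful {V : Type} (G : MGraph V) (I : Set (Set V × Set V × Set V)) : Prop :=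
  ∀ x y : V, x ≠ y → G.Adj x y →
    ∀ Z : Set V, x ∉ Z → y ∉ Z → ({x}, {y}, Z) ∉ I

/-- `G` satisfies the V-adjacency-faithfulness assumption with `I`: for virtually
adjacent `x, y` and any `Z ⊆ V ∖ {x, y}`, the triple `({x}, {y}, Z)` is not in `I`. -/
def VAdjFaithful {V : Type} (G : MGraph V) (I : Set (Set V × Set V × Set V)) : Prop :=
  ∀ x y : V, G.VAdj x y →
    ∀ Z : Set V, x ∉ Z → y ∉ Z → ({x}, {y}, Z) ∉ I

/-- A MAG `G` is NoE-minimal with `I`: no MAG over `V` with strictly fewer edges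
satisfies the Markov assumption with `I`. -/
def NoEMinimalMAG {V : Type} (G : MGraph V) (I : Set (Set V × Set V × Set V)) : Prop :=
  ¬ ∃ G' : MGraph V, G'.IsMAG ∧ G'.numEdges < G.numEdges ∧ Markov G' I

/-- An SMCM `G` is NoE-minimal with `I`: no SMCM over `V` with strictly fewer edges
satisfies the Markov assumption with `I`. -/
def NoEMinimalSMCM {V : Type} (G : MGraph V) (I : Set (Set V × Set V × Set V)) : Prop :=
  ¬ ∃ G' : MGraph V, G'.Acyclic ∧ G'.numEdges < G.numEdges ∧ Markov G' I

/-- An SMCM `G` is V-adjacency-minimal with `I`: no SMCM over `V` with strictly fewer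
virtual adjacencies satisfies the Markov assumption with `I`. -/
def VAdjMinimal {V : Type} (G : MGraph V) (I : Set (Set V × Set V × Set V)) : Prop :=
  ¬ ∃ G' : MGraph V, G'.Acyclic ∧ G'.numVAdj < G.numVAdj ∧ Markov G' I

/-- A MAG `G` is NoI-minimal with `I`: no MAG over `V` entailing strictly more
m-separation statements satisfies the Markov assumption with `I`. -/
def NoIMinimalMAG {V : Type} (G : MGraph V) (I : Set (Set V × Set V × Set V)) : Prop :=
  ¬ ∃ G' : MGraph V, G'.IsMAG ∧ G.numSep < G'.numSep ∧ Markov G' I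

/-- An SMCM `G` is NoI-minimal with `I`: no SMCM over `V` entailing strictly more
m-separation statements satisfies the Markov assumption with `I`. -/
def NoIMinimalSMCM {V : Type} (G : MGraph V) (I : Set (Set V × Set V × Set V)) : Prop :=
  ¬ ∃ G' : MGraph V, G'.Acyclic ∧ G.numSep < G'.numSep ∧ Markov G' I


namespace EKind

/-- Bool: arrowhead at left endpoint. -/
def aL : EKind → Bool | .fwd => false | .bwd => true | .bi => true
/-- Bool: arrowhead at right endpoint. -/
def aR : EKind → Bool | .fwd => true | .bwd => false | .bi => true
/-- Reverse traversal direction. -/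
def flip : EKind → EKind | .fwd => .bwd | .bwd => .fwd | .bi => .bi

@[simp] lemma flip_flip (k : EKind) : k.flip.flip = k := by cases k <;> rfl
@[simp] lemma aL_flip (k : EKind) : k.flip.aL = k.aR := by cases k <;> rfl
@[simp] lemma aR_flip (k : EKind) : k.flip.aR = k.aL := by cases k <;> rfl

lemma arrowLeft_iff (k : EKind) : k.arrowLeft ↔ k.aL = true := by
  cases k <;> simp [arrowLeft, aL]
lemma arrowRight_iff (k : EKind) : k.arrowRight ↔ k.aR = true := by
  cases k <;> simp [arrowRight, aR]

end EKind

namespace MGraph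

variable {V : Type}

lemma edgeKind_flip {G : MGraph V} {k : EKind} {a b : V} (h : G.edgeKind k a b) :
    G.edgeKind k.flip b a := by
  cases k <;> simp [edgeKind, EKind.flip] at h ⊢ <;> [exact h; exact h; exact G.bidir_symm _ _ h]

lemma edgeKind_ne {G : MGraph V} {k : EKind} {a : V} (h : G.edgeKind k a a) : False := by
  cases k <;> simp [edgeKind] at h <;>
    [exact G.dir_irrefl _ h; exact G.dir_irrefl _ h; exact G.bidir_irrefl _ h]

/-- Walks in a mixed graph (vertices may repeat). -/
inductive W (G : MGraph V) : V → V → Type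
  | nil (x : V) : W G x x
  | cons {x y z : V} (k : EKind) (h : G.edgeKind k x y) (w : W G y z) : W G x z

namespace W

variable {G : MGraph V}

def vs : ∀ {x y : V}, W G x y → List V
  | x, _, .nil _ => [x]
  | x, _, .cons _ _ w => x :: w.vs

def ks : ∀ {x y : V}, W G x y → List EKind
  | _, _, .nil _ => []
  | _, _, .cons k _ w => k :: w.ks

def append : ∀ {x y z : V}, W G x y → W G y z → W G x z
  | _, _, _, .nil _, w2 => w2
  | _, _, _, .cons k h w, w2 => .cons k h (w.append w2)

def lastK : ∀ {x y : V}, W G x y → EKind → EKind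
  | _, _, .nil _, d => d
  | _, _, .cons k _ w, _ => w.lastK k

def firstK : ∀ {x y : V}, W G x y → EKind
  | _, _, .nil _ => .fwd
  | _, _, .cons k _ _ => k

@[simp] lemma vs_nil (x : V) : (W.nil (G := G) x).vs = [x] := rfl
@[simp] lemma ks_nil (x : V) : (W.nil (G := G) x).ks = [] := rfl
@[simp] lemma vs_cons {x y z : V} (k : EKind) (h : G.edgeKind k x y) (w : W G y z) :
    (W.cons k h w).vs = x :: w.vs := rfl
@[simp] lemma ks_cons {x y z : V} (k : EKind) (h : G.edgeKind k x y) (w : W G y z) :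
    (W.cons k h w).ks = k :: w.ks := rfl
@[simp] lemma append_nil_left {x z : V} (w2 : W G x z) :
    (W.nil x).append w2 = w2 := rfl
@[simp] lemma append_cons {x y y' z : V} (k : EKind) (h : G.edgeKind k x y)
    (w : W G y y') (w2 : W G y' z) :
    (W.cons k h w).append w2 = W.cons k h (w.append w2) := rfl

lemma vs_length {x y : V} (w : W G x y) : w.vs.length = w.ks.length + 1 := by
  induction w with
  | nil => simp
  | cons k h w ih => simp [ih]

lemma vs_ne_nil {x y : V} (w : W G x y) : w.vs ≠ [] := by
  cases w <;> simp [vs]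

lemma vs_head {x y : V} (w : W G x y) : w.vs.head? = some x := by
  cases w <;> rfl

lemma vs_getLast : ∀ {x y : V} (w : W G x y), w.vs.getLast? = some y
  | _, _, .nil x => rfl
  | _, _, .cons k h w => by
      have ih := vs_getLast w
      cases hw : w.vs with
      | nil => exact absurd hw w.vs_ne_nil
      | cons a l =>
          show (_ :: w.vs).getLast? = _
          rw [hw, List.getLast?_cons_cons, ← hw, ih]

lemma vs_append {x y z : V} (w1 : W G x y) (w2 : W G y z) :
    (w1.append w2).vs = w1.vs ++ w2.vs.tail := by
  induction w1 with
  | nil => cases w2 <;> rfl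
  | cons k h w ih => simp [ih]

lemma ks_append {x y z : V} (w1 : W G x y) (w2 : W G y z) :
    (w1.append w2).ks = w1.ks ++ w2.ks := by
  induction w1 with
  | nil => rfl
  | cons k h w ih => simp [ih]

lemma lastK_congr {x y : V} (w : W G x y) (h : 0 < w.ks.length) (d1 d2 : EKind) :
    w.lastK d1 = w.lastK d2 := by
  cases w with
  | nil => simp [ks] at h
  | cons k h' w' => rfl

lemma lastK_append : ∀ {x y z : V} (w1 : W G x y) (w2 : W G y z) (d : EKind),
    0 < w2.ks.length → (w1.append w2).lastK d = w2.lastK d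
  | _, _, _, .nil _, w2, d, _ => rfl
  | _, _, _, .cons k h w, w2, d, h2 => by
      show (w.append w2).lastK k = w2.lastK d
      rw [lastK_append w w2 k h2]
      exact lastK_congr w2 h2 k d

lemma firstK_append {x y z : V} (w1 : W G x y) (w2 : W G y z) (h1 : 0 < w1.ks.length) :
    (w1.append w2).firstK = w1.firstK := by
  cases w1 with
  | nil => simp [ks] at h1
  | cons k h w => rfl

lemma append_assoc {x y z t : V} (w1 : W G x y) (w2 : W G y z) (w3 : W G z t) :
    (w1.append w2).append w3 = w1.append (w2.append w3) := by
  induction w1 with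
  | nil => rfl
  | cons k h w ih => simp [ih]

/-- Conditions at all "left-context" positions: the head of the walk gets condition
pairing the incoming kind `k` with the first edge kind, and so on recursively. -/
def PairsFrom (P : V → EKind → EKind → Prop) : ∀ {x y : V}, EKind → W G x y → Prop
  | _, _, _, .nil _ => True
  | x, _, k, .cons k' _ w => P x k k' ∧ PairsFrom P k' w

/-- Conditions at all interior vertices of the walk. -/
def Pairs (P : V → EKind → EKind → Prop) : ∀ {x y : V}, W G x y → Prop
  | _, _, .nil _ => True
  | _, _, .cons k _ w => PairsFrom P k w

@[simp] lemma pairsFrom_nil (P : V → EKind → EKind → Prop) (k : EKind) (x : V) :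
    PairsFrom (G := G) P k (W.nil x) ↔ True := Iff.rfl

lemma pairsFrom_cons (P : V → EKind → EKind → Prop) (k : EKind) {x y z : V}
    (k' : EKind) (h : G.edgeKind k' x y) (w : W G y z) :
    PairsFrom P k (W.cons k' h w) ↔ P x k k' ∧ PairsFrom P k' w := Iff.rfl

@[simp] lemma pairs_nil (P : V → EKind → EKind → Prop) (x : V) :
    Pairs (G := G) P (W.nil x) ↔ True := Iff.rfl

lemma pairs_cons (P : V → EKind → EKind → Prop) {x y z : V}
    (k : EKind) (h : G.edgeKind k x y) (w : W G y z) :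
    Pairs P (W.cons k h w) ↔ PairsFrom P k w := Iff.rfl

lemma pairs_of_pairsFrom {P : V → EKind → EKind → Prop} {k : EKind} {x y : V}
    {w : W G x y} (h : PairsFrom P k w) : Pairs P w := by
  cases w with
  | nil => trivial
  | cons k' h' w' => exact h.2

lemma pairsFrom_mono {P Q : V → EKind → EKind → Prop}
    (hPQ : ∀ v k k', P v k k' → Q v k k') {k : EKind} {x y : V} {w : W G x y}
    (h : PairsFrom P k w) : PairsFrom Q k w := by
  induction w generalizing k with
  | nil => trivial
  | cons k' h' w' ih => exact ⟨hPQ _ _ _ h.1, ih h.2⟩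

lemma pairs_mono {P Q : V → EKind → EKind → Prop}
    (hPQ : ∀ v k k', P v k k' → Q v k k') {x y : V} {w : W G x y}
    (h : Pairs P w) : Pairs Q w := by
  cases w with
  | nil => trivial
  | cons k' h' w' => exact pairsFrom_mono hPQ h

lemma pairsFrom_and {P Q : V → EKind → EKind → Prop} {k : EKind} {x y : V} {w : W G x y}
    (hP : PairsFrom P k w) (hQ : PairsFrom Q k w) :
    PairsFrom (fun v k k' => P v k k' ∧ Q v k k') k w := by
  induction w generalizing k with
  | nil => trivial
  | cons k' h' w' ih => exact ⟨⟨hP.1, hQ.1⟩, ih hP.2 hQ.2⟩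

lemma pairsFrom_append {P : V → EKind → EKind → Prop} {k : EKind} {x y z : V}
    (w1 : W G x y) (w2 : W G y z) :
    PairsFrom P k (w1.append w2) ↔ PairsFrom P k w1 ∧ PairsFrom P (w1.lastK k) w2 := by
  induction w1 generalizing k with
  | nil => simp [lastK]
  | cons k' h' w' ih =>
      show P _ k k' ∧ PairsFrom P k' (w'.append w2) ↔ _
      rw [ih]
      show _ ↔ (P _ k k' ∧ PairsFrom P k' w') ∧ PairsFrom P (w'.lastK k') w2
      tauto

end W

end MGraph

namespace MGraph

variable {V : Type} {G : MGraph V}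

/-- Ancestors of the set `Z`. -/
def AnSet (G : MGraph V) (Z : Set V) : Set V := {v | ∃ d ∈ Z, G.Ancestor v d}

lemma subset_anSet (Z : Set V) : Z ⊆ G.AnSet Z :=
  fun v hv => ⟨v, hv, Relation.ReflTransGen.refl⟩

lemma anSet_closed {Z : Set V} {a b : V} (hab : G.Ancestor a b) (hb : b ∈ G.AnSet Z) :
    a ∈ G.AnSet Z := by
  obtain ⟨d, hd, hbd⟩ := hb
  exact ⟨d, hd, hab.trans hbd⟩

/-- Junction condition at an interior vertex: colliders must be in `A`,
non-colliders must avoid `Z`. -/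
def JC (Z A : Set V) (v : V) (kl kr : EKind) : Prop :=
  if kl.aR && kr.aL then v ∈ A else v ∉ Z

lemma jc_coll {Z A : Set V} {v : V} {kl kr : EKind} (h : JC Z A v kl kr)
    (h1 : kl.aR = true) (h2 : kr.aL = true) : v ∈ A := by
  simpa [JC, h1, h2] using h

lemma jc_non {Z A : Set V} {v : V} {kl kr : EKind} (h : JC Z A v kl kr)
    (h1 : ¬(kl.aR = true ∧ kr.aL = true)) : v ∉ Z := by
  rw [JC, if_neg (by simpa [Bool.and_eq_true] using h1)] at h; exact h

lemma jc_arrows_of_mem {Z A : Set V} {v : V} {kl kr : EKind} (h : JC Z A v kl kr)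
    (hv : v ∈ Z) : kl.aR = true ∧ kr.aL = true := by
  by_contra hc
  exact jc_non h hc hv

lemma jc_intro {Z A : Set V} {v : V} {kl kr : EKind}
    (h1 : kl.aR = true → kr.aL = true → v ∈ A)
    (h2 : ¬(kl.aR = true ∧ kr.aL = true) → v ∉ Z) : JC Z A v kl kr := by
  rw [JC]
  split
  · next hb => rw [Bool.and_eq_true] at hb; exact h1 hb.1 hb.2
  · next hb => rw [Bool.and_eq_true] at hb; exact h2 (by simpa using hb)

lemma jc_mono {Z A A' : Set V} {v : V} {kl kr : EKind} (hA : A ⊆ A')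
    (h : JC Z A v kl kr) : JC Z A' v kl kr := by
  rw [JC] at h ⊢; split at h <;> simp_all; exact hA h

namespace W

def reverse : ∀ {x y : V}, W G x y → W G y x
  | _, _, .nil x => .nil x
  | _, _, .cons k h w => w.reverse.append (.cons k.flip (edgeKind_flip h) (.nil _))

@[simp] lemma reverse_nil (x : V) : (W.nil (G := G) x).reverse = .nil x := rfl

lemma reverse_cons {x y z : V} (k : EKind) (h : G.edgeKind k x y) (w : W G y z) :
    (W.cons k h w).reverse
      = w.reverse.append (.cons k.flip (edgeKind_flip h) (.nil _)) := rfl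

lemma ks_length_reverse {x y : V} (w : W G x y) :
    w.reverse.ks.length = w.ks.length := by
  induction w with
  | nil => rfl
  | cons k h w ih => rw [reverse_cons, ks_append]; simp [ih]

lemma lastK_reverse {x y : V} (w : W G x y) (d : EKind) (hw : 0 < w.ks.length) :
    w.reverse.lastK d = w.firstK.flip := by
  cases w with
  | nil => simp [ks] at hw
  | cons k h w' =>
      rw [reverse_cons, lastK_append _ _ _ (by simp [ks])]
      rfl

lemma firstK_reverse : ∀ {x y : V} (w : W G x y), 0 < w.ks.length →
    w.reverse.firstK = (w.lastK .fwd).flip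
  | _, _, .nil _, hw => by simp [ks] at hw
  | _, _, .cons k h (W.nil _), _ => rfl
  | _, _, .cons k h (W.cons k' h' w'), _ => by
      rw [reverse_cons, firstK_append _ _ (by rw [ks_length_reverse]; simp [ks])]
      rw [firstK_reverse (W.cons k' h' w') (by simp [ks])]
      rfl

lemma pairs_append_nonempty {P : V → EKind → EKind → Prop} {x y z : V}
    (w1 : W G x y) (w2 : W G y z) (h1 : 0 < w1.ks.length) :
    Pairs P (w1.append w2) ↔ Pairs P w1 ∧ PairsFrom P (w1.lastK .fwd) w2 := by
  cases w1 with
  | nil => simp [ks] at h1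
  | cons k h w' =>
      rw [append_cons, pairs_cons, pairs_cons, pairsFrom_append]
      show _ ∧ PairsFrom P (w'.lastK k) w2 ↔ _ ∧ PairsFrom P ((W.cons k h w').lastK .fwd) w2
      rfl

lemma pairs_reverse {P : V → EKind → EKind → Prop} : ∀ {x y : V} (w : W G x y),
    (Pairs P w.reverse ↔ Pairs (fun v kl kr => P v kr.flip kl.flip) w)
  | _, _, .nil _ => Iff.rfl
  | _, _, .cons k h (W.nil _) => by
      rw [reverse_cons]
      show Pairs P (W.cons k.flip _ (W.nil _)) ↔ _
      rw [pairs_cons, pairs_cons]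
      simp [PairsFrom]
  | x, _, .cons k h (W.cons k' h' w') => by
      have ih := pairs_reverse (P := P) (W.cons k' h' w')
      rw [reverse_cons]
      rw [pairs_append_nonempty _ _ (by rw [ks_length_reverse]; simp [ks])]
      rw [lastK_reverse _ _ (by simp [ks])]
      show _ ∧ (P _ k'.flip k.flip ∧ True) ↔ _
      rw [ih]
      exact ⟨fun ⟨a, b, _⟩ => ⟨b, a⟩, fun ⟨a, b⟩ => ⟨b, a, trivial⟩⟩

lemma getD_irrel {α : Type*} {l : List α} {i : ℕ} (h : i < l.length) (d1 d2 : α) :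
    l.getD i d1 = l.getD i d2 := by
  rw [List.getD_eq_getElem _ _ h, List.getD_eq_getElem _ _ h]

lemma vs_getD_zero {x y : V} (w : W G x y) (d : V) : w.vs.getD 0 d = x := by
  cases w <;> rfl

lemma pairsFrom_iff_indexed {P : V → EKind → EKind → Prop} :
    ∀ {x y : V} (w : W G x y) (k : EKind) (d : V),
    PairsFrom P k w ↔ ∀ i, i < w.ks.length →
      P (w.vs.getD i d) ((k :: w.ks).getD i .fwd) (w.ks.getD i .fwd)
  | _, _, .nil _, k, d => by simp [ks]
  | x, _, .cons k' h' w', k, d => by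
      rw [pairsFrom_cons, pairsFrom_iff_indexed w' k' d]
      constructor
      · rintro ⟨h1, h2⟩ i hi
        cases i with
        | zero => simpa using h1
        | succ i =>
            simp only [ks_cons, List.length_cons, Nat.add_lt_add_iff_right] at hi
            have := h2 i hi
            simp only [vs_cons, ks_cons]
            rwa [List.getD_cons_succ, List.getD_cons_succ, List.getD_cons_succ]
      · intro h
        refine ⟨by simpa using h 0 (by simp [ks]), fun i hi => ?_⟩
        have := h (i + 1) (by simp only [ks_cons, List.length_cons]; omega)
        simp only [vs_cons, ks_cons] at this
        rwa [List.getD_cons_succ, List.getD_cons_succ, List.getD_cons_succ] at this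

lemma pairs_iff_indexed {P : V → EKind → EKind → Prop} {x y : V} (w : W G x y) (d : V) :
    Pairs P w ↔ ∀ i, i + 1 < w.ks.length →
      P (w.vs.getD (i + 1) d) (w.ks.getD i .fwd) (w.ks.getD (i + 1) .fwd) := by
  cases w with
  | nil => simp [ks]
  | cons k h w' =>
      rw [pairs_cons, pairsFrom_iff_indexed w' k d]
      constructor
      · intro h1 i hi
        simp only [ks_cons, List.length_cons] at hi
        have := h1 i (by omega)
        simp only [vs_cons, ks_cons]
        rwa [List.getD_cons_succ, List.getD_cons_succ]
      · intro h1 i hi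
        have := h1 i (by simp only [ks_cons, List.length_cons]; omega)
        simp only [vs_cons, ks_cons] at this
        rwa [List.getD_cons_succ, List.getD_cons_succ] at this

lemma valid_indexed : ∀ {x y : V} (w : W G x y) (i : ℕ) (d : V), i < w.ks.length →
      G.edgeKind (w.ks.getD i .fwd) (w.vs.getD i d) (w.vs.getD (i + 1) d)
  | _, _, .cons k h w', 0, d, _ => by
      show G.edgeKind k _ _
      rw [vs_cons, List.getD_cons_zero, List.getD_cons_succ, vs_getD_zero w']
      exact h
  | x, _, .cons k h w', i + 1, d, hi => by
      simp only [ks_cons, List.length_cons, Nat.add_lt_add_iff_right] at hi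
      have := valid_indexed w' i d hi
      simp only [vs_cons, ks_cons]
      rwa [List.getD_cons_succ, List.getD_cons_succ, List.getD_cons_succ]

/-- Build a `Path` from a walk with no duplicate vertices. -/
def toPath {x y : V} (w : W G x y) (h : w.vs.Nodup) : G.Path x y :=
  ⟨w.vs, w.ks, w.vs_length, h, w.vs_head, w.vs_getLast, fun i hi => w.valid_indexed i x hi⟩

end W

/-- Build a walk from vertex/kind lists forming a valid path-like structure. -/
lemma walk_of_lists : ∀ (ks : List EKind) (vs : List V) (x y : V),
    vs.length = ks.length + 1 → vs.head? = some x → vs.getLast? = some y →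
    (∀ i d, i < ks.length → G.edgeKind (ks.getD i .fwd) (vs.getD i d) (vs.getD (i + 1) d)) →
    ∃ w : W G x y, w.vs = vs ∧ w.ks = ks
  | [], vs, x, y, hlen, hhead, hlast, _ => by
      match vs, hlen with
      | [v], _ =>
        simp only [List.head?_cons, Option.some.injEq] at hhead
        simp only [List.getLast?_singleton, Option.some.injEq] at hlast
        subst hhead; subst hlast
        exact ⟨.nil _, rfl, rfl⟩
  | k :: ks, vs, x, y, hlen, hhead, hlast, hvalid => by
      match vs, hlen with
      | v :: v' :: vs', hlen =>
        simp only [List.head?_cons, Option.some.injEq] at hhead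
        subst hhead
        have hlast' : (v' :: vs').getLast? = some y := by
          rwa [List.getLast?_cons_cons] at hlast
        have hvalid' : ∀ i d, i < ks.length →
            G.edgeKind (ks.getD i .fwd) ((v' :: vs').getD i d) ((v' :: vs').getD (i + 1) d) := by
          intro i d hi
          have := hvalid (i + 1) d (by simpa using Nat.add_lt_add_right hi 1)
          rwa [List.getD_cons_succ, List.getD_cons_succ, List.getD_cons_succ] at this
        obtain ⟨w', hvs', hks'⟩ := walk_of_lists ks (v' :: vs') v' y (by simpa using hlen) rfl hlast' hvalid'
        have hedge : G.edgeKind k v v' := by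
          have := hvalid 0 v (by simp)
          simpa using this
        exact ⟨.cons k hedge w', by simp [hvs'], by simp [hks']⟩

lemma walk_of_path {x y : V} (p : G.Path x y) :
    ∃ w : W G x y, w.vs = p.verts ∧ w.ks = p.kinds := by
  refine walk_of_lists p.kinds p.verts x y p.len_eq p.head_eq p.last_eq ?_
  intro i d hi
  have := p.valid i hi
  have b1 : i < p.verts.length := by rw [p.len_eq]; omega
  have b2 : i + 1 < p.verts.length := by rw [p.len_eq]; omega
  rwa [W.getD_irrel b1 x d, W.getD_irrel b2 x d] at this

end MGraph

namespace MGraph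

variable {V : Type} {G : MGraph V}

namespace W

lemma vs_last_mem {x y : V} (w : W G x y) : y ∈ w.vs := by
  induction w with
  | nil => simp [vs]
  | cons k h w ih => simp [vs, ih]

lemma vs_first_mem {x y : V} (w : W G x y) : x ∈ w.vs := by
  cases w <;> simp [vs]

lemma ne_of_nodup {x y : V} (w : W G x y) (h : w.vs.Nodup) (hne : 0 < w.ks.length) :
    x ≠ y := by
  cases w with
  | nil => simp [ks] at hne
  | cons k h' w' =>
      have hy : y ∈ w'.vs := w'.vs_last_mem
      rw [vs_cons, List.nodup_cons] at h
      intro he; subst he; exact h.1 hy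

lemma append_nil_right {x y : V} (w : W G x y) : w.append (W.nil y) = w := by
  induction w with
  | nil => rfl
  | cons k h w ih => rw [append_cons, ih]

lemma pairs_left {P : V → EKind → EKind → Prop} {x y z : V} {w1 : W G x y}
    {w2 : W G y z} (h : Pairs P (w1.append w2)) : Pairs P w1 := by
  cases w1 with
  | nil => trivial
  | cons k h' w' =>
      rw [append_cons, pairs_cons, pairsFrom_append] at h
      exact h.1

lemma pairsFrom_right {P : V → EKind → EKind → Prop} {k : EKind} {x y z : V}
    {w1 : W G x y} {w2 : W G y z} (h : PairsFrom P k (w1.append w2)) :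
    PairsFrom P (w1.lastK k) w2 := ((pairsFrom_append w1 w2).1 h).2

lemma pairs_right {P : V → EKind → EKind → Prop} {x y z : V} {w1 : W G x y}
    {w2 : W G y z} (h : Pairs P (w1.append w2)) : Pairs P w2 := by
  cases w1 with
  | nil => exact h
  | cons k h' w' =>
      rw [append_cons, pairs_cons, pairsFrom_append] at h
      exact pairs_of_pairsFrom h.2

/-- Split a walk at an occurrence of a vertex in its vertex list. -/
lemma split_walk : ∀ {x y : V} (w : W G x y) (l1 : List V) (v : V) (l2 : List V),
    w.vs = l1 ++ v :: l2 →
    ∃ (w1 : W G x v) (w2 : W G v y), w = w1.append w2 ∧ w1.vs = l1 ++ [v] ∧ w2.vs = v :: l2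
  | x, y, w, [], v, l2, h => by
      have hx : v = x := by
        have := w.vs_head
        rw [h] at this
        simpa using this
      subst hx
      exact ⟨.nil v, w, rfl, rfl, h⟩
  | x, y, w, a :: l1, v, l2, h => by
      cases w with
      | nil =>
          rw [vs_nil] at h
          have hlen : ([x] : List V).length = (a :: l1 ++ v :: l2).length := by rw [h]
          simp at hlen
      | cons k he w' =>
          rw [vs_cons] at h
          have ha : a = x := by simpa using congrArg List.head? h.symm
          subst ha
          have h' : w'.vs = l1 ++ v :: l2 := by simpa using h
          obtain ⟨w1, w2, heq, hv1, hv2⟩ := split_walk w' l1 v l2 h'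
          exact ⟨.cons k he w1, w2, by rw [heq]; rfl, by simp [hv1], hv2⟩

end W

lemma exists_dup : ∀ (l : List V), ¬ l.Nodup →
    ∃ (l1 : List V) (v : V) (l2 l3 : List V), l = l1 ++ v :: (l2 ++ v :: l3)
  | [], h => absurd List.nodup_nil h
  | a :: l, h => by
      by_cases ha : a ∈ l
      · obtain ⟨s, t, rfl⟩ := List.append_of_mem ha
        exact ⟨[], a, s, t, rfl⟩
      · have hl : ¬ l.Nodup := fun hn => h (List.nodup_cons.2 ⟨ha, hn⟩)
        obtain ⟨l1, v, l2, l3, rfl⟩ := exists_dup l hl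
        exact ⟨a :: l1, v, l2, l3, rfl⟩

/-- The directed chase: from a vertex leaving along a directed edge, following the
walk, we reach `A` or run off the end of the walk along directed edges. -/
lemma chase {Z A : Set V} (hA : ∀ a b, G.dir a b → b ∈ A → a ∈ A) :
    ∀ {u t : V} (w : W G u t), w.firstK = .fwd → 0 < w.ks.length →
      W.Pairs (JC Z A) w → u ∈ A ∨ (G.Ancestor u t ∧ (w.lastK .fwd).aR = true)
  | u, t, .cons k h (W.nil _), hf, _, hp => by
      rw [W.firstK] at hf; subst hf
      exact Or.inr ⟨Relation.ReflTransGen.single h, rfl⟩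
  | u, t, .cons k h (W.cons k2 h2 w''), hf, _, hp => by
      rw [W.firstK] at hf; subst hf
      rw [W.pairs_cons, W.pairsFrom_cons] at hp
      obtain ⟨hj, hrest⟩ := hp
      by_cases hk2 : k2.aL = true
      · exact Or.inl (hA _ _ h (jc_coll hj rfl hk2))
      · have hk2' : k2 = .fwd := by cases k2 <;> simp [EKind.aL] at hk2 ⊢
        subst hk2'
        have := chase hA (W.cons .fwd h2 w'') rfl (by simp [W.ks]) hrest
        rcases this with hc | ⟨han, hlast⟩
        · exact Or.inl (hA _ _ h hc)
        · exact Or.inr ⟨Relation.ReflTransGen.head h han, hlast⟩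

/-- Any connecting walk can be shortened to a connecting walk without repeated
vertices. -/
lemma shorten {Z A : Set V} (hZA : Z ⊆ A) (hA : ∀ a b, G.dir a b → b ∈ A → a ∈ A) :
    ∀ (n : ℕ) {x y : V} (w : W G x y), w.ks.length ≤ n → W.Pairs (JC Z A) w →
      ∃ w' : W G x y, W.Pairs (JC Z A) w' ∧ w'.vs.Nodup := by
  intro n
  induction n with
  | zero =>
      intro x y w hl hp
      cases w with
      | nil => exact ⟨.nil x, trivial, by simp⟩
      | cons k h w' => simp [W.ks] at hl
  | succ n ih =>
      intro x y w hl hp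
      by_cases hnd : w.vs.Nodup
      · exact ⟨w, hp, hnd⟩
      obtain ⟨l1, v, l2, l3, hdec⟩ := exists_dup w.vs hnd
      obtain ⟨w1, w23, rfl, hv1, hv23⟩ := W.split_walk w l1 v (l2 ++ v :: l3) hdec
      obtain ⟨w2, w3, rfl, hv2, hv3⟩ := W.split_walk w23 (v :: l2) v l3 (by simpa using hv23)
      have hw2len : 0 < w2.ks.length := by
        have := w2.vs_length
        rw [hv2] at this
        simp at this; omega
      have hlen1 : (w1.append w3).ks.length ≤ n := by
        have e1 := W.ks_append w1 (w2.append w3)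
        have e2 := W.ks_append w2 w3
        have e3 := W.ks_append w1 w3
        rw [e1, e2] at hl
        rw [e3]
        simp at hl ⊢
        omega
      have hgood : W.Pairs (JC Z A) (w1.append w3) := by
        cases w1 with
        | nil =>
            simp only [W.append_nil_left] at hp ⊢
            exact W.pairs_right hp
        | cons k1 hk1 w1' =>
            cases w3 with
            | nil =>
                rw [W.append_nil_right]
                exact W.pairs_left hp
            | cons k3 hk3 w3' =>
                rw [W.append_cons, W.pairs_cons, W.pairsFrom_append]
                rw [W.append_cons, W.pairs_cons, W.pairsFrom_append] at hp
                obtain ⟨hp1, hp23⟩ := hp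
                rw [W.pairsFrom_append] at hp23
                obtain ⟨hp2, hp3⟩ := hp23
                refine ⟨hp1, ?_⟩
                rw [W.pairsFrom_cons]
                rw [W.pairsFrom_cons] at hp3
                refine ⟨?_, hp3.2⟩
                -- junction at v
                set kl := w1'.lastK k1 with hkl
                have hJ2 : JC Z A v (w2.lastK kl) k3 := hp3.1
                refine jc_intro (fun hklR hk3L => ?_) (fun hn => ?_)
                · -- both arrowheads: show v ∈ A
                  cases w2 with
                  | nil => simp [W.ks] at hw2len
                  | cons k2 hk2' w2' =>
                      rw [W.pairsFrom_cons] at hp2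
                      by_cases hf : k2.aL = true
                      · exact jc_coll hp2.1 hklR hf
                      · by_cases hl2 : ((W.cons k2 hk2' w2').lastK kl).aR = true
                        · exact jc_coll hJ2 hl2 hk3L
                        · have hk2f : k2 = .fwd := by cases k2 <;> simp [EKind.aL] at hf ⊢
                          subst hk2f
                          have := chase hA (W.cons .fwd hk2' w2') rfl (by simp [W.ks])
                            (by rw [W.pairs_cons]; exact hp2.2)
                          rcases this with hc | ⟨_, hcon⟩
                          · exact hc
                          · rw [W.lastK_congr _ (by simp [W.ks]) .fwd kl] at hcon
                            exact absurd hcon hl2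
                · -- not both arrowheads: v ∉ Z
                  rcases Decidable.not_and_iff_or_not.1 hn with hn1 | hn2
                  · cases w2 with
                    | nil => simp [W.ks] at hw2len
                    | cons k2 hk2' w2' =>
                        rw [W.pairsFrom_cons] at hp2
                        exact jc_non hp2.1 (fun hc => hn1 hc.1)
                  · exact jc_non hJ2 (fun hc => hn2 hc.2)
      have hnd' : (w1.append w3).ks.length ≤ n := hlen1
      exact ih (w1.append w3) hnd' hgood

end MGraph

namespace MGraph

variable {V : Type} {G : MGraph V}

lemma vert_eq_getD {x y : V} (p : G.Path x y) (w : W G x y) (hv : w.vs = p.verts)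
    (i : ℕ) : p.vert i = w.vs.getD i x := by rw [hv]; rfl

lemma mconn_iff_pairs {x y : V} (p : G.Path x y) (w : W G x y)
    (hv : w.vs = p.verts) (hk : w.ks = p.kinds) (Z : Set V) :
    p.MConn Z ↔ W.Pairs (JC Z (G.AnSet Z)) w := by
  rw [W.pairs_iff_indexed w x]
  have hlen : w.ks.length + 1 = p.verts.length := by rw [hk, p.len_eq]
  have hkind : ∀ m, p.kind m = w.ks.getD m .fwd := by intro m; rw [Path.kind, hk]
  constructor
  · intro h i hi
    have h2 : (i + 1) + 1 < p.verts.length := by omega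
    have hcond := h (i + 1) (by omega) h2
    refine jc_intro (fun hR hL => ?_) (fun hn => ?_)
    · have hcol : p.ColliderAt (i + 1) := by
        refine ⟨by omega, h2, ?_, ?_⟩
        · rw [EKind.arrowRight_iff, show i + 1 - 1 = i from rfl, hkind]; exact hR
        · rw [EKind.arrowLeft_iff, hkind]; exact hL
      obtain ⟨d, hd, hdan⟩ := hcond.1 hcol
      rw [vert_eq_getD p w hv] at hdan
      exact ⟨d, hd, hdan⟩
    · have hncol : ¬ p.ColliderAt (i + 1) := by
        rintro ⟨-, -, hR, hL⟩
        rw [EKind.arrowRight_iff, show i + 1 - 1 = i from rfl, hkind] at hR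
        rw [EKind.arrowLeft_iff, hkind] at hL
        exact hn ⟨hR, hL⟩
      have := hcond.2 hncol
      rwa [vert_eq_getD p w hv] at this
  · intro h i h1 h2
    obtain ⟨j, rfl⟩ : ∃ j, i = j + 1 := ⟨i - 1, by omega⟩
    have hj := h j (by omega)
    constructor
    · rintro ⟨-, -, hR, hL⟩
      rw [EKind.arrowRight_iff, show j + 1 - 1 = j from rfl, hkind] at hR
      rw [EKind.arrowLeft_iff, hkind] at hL
      obtain ⟨d, hd, hdan⟩ := jc_coll hj hR hL
      rw [← vert_eq_getD p w hv] at hdan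
      exact ⟨d, hd, hdan⟩
    · intro hncol
      rw [vert_eq_getD p w hv]
      refine jc_non hj (fun hc => hncol ⟨by omega, h2, ?_, ?_⟩)
      · rw [EKind.arrowRight_iff, show j + 1 - 1 = j from rfl, hkind]; exact hc.1
      · rw [EKind.arrowLeft_iff, hkind]; exact hc.2

/-- Interior condition corresponding to inducing paths. -/
def IndP (G : MGraph V) (x y : V) : V → EKind → EKind → Prop :=
  fun v kl kr => (kl.aR = true ∧ kr.aL = true) ∧ (G.Ancestor v x ∨ G.Ancestor v y)

lemma inducing_iff_pairs {x y : V} (p : G.Path x y) (w : W G x y)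
    (hv : w.vs = p.verts) (hk : w.ks = p.kinds) :
    p.Inducing ↔ W.Pairs (IndP G x y) w := by
  rw [W.pairs_iff_indexed w x]
  have hlen : w.ks.length + 1 = p.verts.length := by rw [hk, p.len_eq]
  have hkind : ∀ m, p.kind m = w.ks.getD m .fwd := by intro m; rw [Path.kind, hk]
  constructor
  · intro h i hi
    have h2 : (i + 1) + 1 < p.verts.length := by omega
    obtain ⟨⟨-, -, hR, hL⟩, han⟩ := h (i + 1) (by omega) h2
    rw [EKind.arrowRight_iff, show i + 1 - 1 = i from rfl, hkind] at hR
    rw [EKind.arrowLeft_iff, hkind] at hL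
    rw [vert_eq_getD p w hv] at han
    exact ⟨⟨hR, hL⟩, han⟩
  · intro h i h1 h2
    obtain ⟨j, rfl⟩ : ∃ j, i = j + 1 := ⟨i - 1, by omega⟩
    obtain ⟨⟨hR, hL⟩, han⟩ := h j (by omega)
    rw [← vert_eq_getD p w hv] at han
    refine ⟨⟨by omega, h2, ?_, ?_⟩, han⟩
    · rw [EKind.arrowRight_iff, show j + 1 - 1 = j from rfl, hkind]; exact hR
    · rw [EKind.arrowLeft_iff, hkind]; exact hL

/-- m-connection via walks. -/
def Conn (G : MGraph V) (Z : Set V) (x y : V) : Prop :=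
  ∃ w : W G x y, W.Pairs (JC Z (G.AnSet Z)) w

lemma jc_flip {Z A : Set V} {v : V} {kl kr : EKind} (h : JC Z A v kl kr) :
    JC Z A v kr.flip kl.flip := by
  rw [JC] at h ⊢
  rw [EKind.aR_flip, EKind.aL_flip, Bool.and_comm]
  exact h

lemma conn_symm {Z : Set V} {x y : V} (h : Conn G Z x y) : Conn G Z y x := by
  obtain ⟨w, hw⟩ := h
  refine ⟨w.reverse, ?_⟩
  rw [W.pairs_reverse]
  exact W.pairs_mono (fun v kl kr hk => jc_flip hk) hw

lemma anSet_dir_closed {Z : Set V} : ∀ a b : V, G.dir a b → b ∈ G.AnSet Z → a ∈ G.AnSet Z :=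
  fun _ _ hd hb => anSet_closed (Relation.ReflTransGen.single hd) hb

lemma conn_shorten {Z : Set V} {x y : V} (h : Conn G Z x y) :
    ∃ w : W G x y, W.Pairs (JC Z (G.AnSet Z)) w ∧ w.vs.Nodup := by
  obtain ⟨w, hw⟩ := h
  exact shorten (subset_anSet Z) anSet_dir_closed w.ks.length w le_rfl hw

lemma msep_iff_not_conn {x y : V} {Z : Set V} :
    G.MSep x y Z ↔ x ≠ y ∧ x ∉ Z ∧ y ∉ Z ∧ ¬ Conn G Z x y := by
  constructor
  · rintro ⟨hne, hx, hy, hxy, hyx⟩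
    refine ⟨hne, hx, hy, fun hc => ?_⟩
    obtain ⟨w, hw, hnd⟩ := conn_shorten hc
    exact hxy (w.toPath hnd) ((mconn_iff_pairs _ w rfl rfl Z).2 hw)
  · rintro ⟨hne, hx, hy, hc⟩
    refine ⟨hne, hx, hy, fun p hp => hc ?_, fun p hp => ?_⟩
    · obtain ⟨w, hv, hk⟩ := walk_of_path p
      exact ⟨w, (mconn_iff_pairs p w hv hk Z).1 hp⟩
    · obtain ⟨w, hv, hk⟩ := walk_of_path p
      exact hc (conn_symm ⟨w, (mconn_iff_pairs p w hv hk Z).1 hp⟩)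

variable {S : MGraph V}

lemma single_path (h : G.edgeKind k x y) (hne : x ≠ y) : ∃ p : G.Path x y, p.Inducing := by
  obtain ⟨w, hv, hk⟩ := walk_of_lists (G := G) [k] [x, y] x y rfl rfl rfl
    (by intro i d hi
        simp only [List.length_cons, List.length_nil] at hi
        have : i = 0 := by omega
        subst this
        simpa using h)
  have hnd : w.vs.Nodup := by rw [hv]; simp [hne]
  refine ⟨w.toPath hnd, ?_⟩
  rw [inducing_iff_pairs _ w rfl rfl, W.pairs_iff_indexed w x]
  intro i hi
  rw [hk] at hi
  simp at hi

lemma dir_mag (h : S.dir a b) : S.mag.dir a b := by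
  have hne : a ≠ b := fun he => S.dir_irrefl a (he ▸ h)
  exact ⟨⟨hne, Or.inl (single_path (k := .fwd) h hne)⟩, Relation.ReflTransGen.single h⟩

lemma mag_ancestor_iff {a b : V} : S.mag.Ancestor a b ↔ S.Ancestor a b := by
  constructor
  · intro h
    induction h with
    | refl => exact Relation.ReflTransGen.refl
    | tail hd hstep ih => exact ih.trans hstep.2
  · intro h
    exact Relation.ReflTransGen.mono (fun u v hd => dir_mag hd) _ _ h

lemma mag_anSet_eq (Z : Set V) : S.mag.AnSet Z = S.AnSet Z := by
  ext v; simp only [AnSet, Set.mem_setOf_eq, mag_ancestor_iff]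

lemma vadj_symm {x y : V} (h : S.VAdj x y) : S.VAdj y x :=
  ⟨h.1.symm, h.2.symm⟩

lemma adj_mag_iff {x y : V} : S.mag.Adj x y ↔ S.VAdj x y := by
  constructor
  · rintro (h | h | h)
    · exact h.1
    · exact vadj_symm h.1
    · exact h.1
  · intro h
    by_cases h1 : S.Ancestor x y
    · exact Or.inl ⟨h, h1⟩
    by_cases h2 : S.Ancestor y x
    · exact Or.inr (Or.inl ⟨vadj_symm h, h2⟩)
    · exact Or.inr (Or.inr ⟨h, h1, h2⟩)

lemma mag_ancestral (hS : S.Acyclic) : S.mag.Ancestral := by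
  constructor
  · intro x y han hne
    have hxy : S.Ancestor x y := mag_ancestor_iff.1 han
    constructor
    · rintro ⟨-, hyx⟩
      exact hne (hS x y hxy hyx)
    · rintro ⟨-, hnxy, -⟩
      exact hnxy hxy
  · rintro x y ⟨hd, hb⟩
    exact hb.2.1 hd.2

end MGraph

namespace MGraph

variable {V : Type} {G : MGraph V}

namespace W

lemma vs_reverse {x y : V} (w : W G x y) : w.reverse.vs = w.vs.reverse := by
  induction w with
  | nil => rfl
  | cons k h w ih =>
      rw [reverse_cons, vs_append, ih]
      simp [vs]

lemma lastK_mem : ∀ {x y : V} (w : W G x y) (d : EKind), 0 < w.ks.length →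
    w.lastK d ∈ w.ks
  | _, _, .cons k h (W.nil _), d, _ => by simp [lastK, ks]
  | _, _, .cons k h (W.cons k2 h2 w''), d, _ => by
      have := lastK_mem (W.cons k2 h2 w'') k (by simp [ks])
      show (W.cons k2 h2 w'').lastK k ∈ _
      simp only [ks_cons, List.mem_cons] at this ⊢
      tauto

lemma lastK_cons {x y z : V} (k : EKind) (h : G.edgeKind k x y) (w : W G y z)
    (hne : 0 < w.ks.length) (d : EKind) :
    (W.cons k h w).lastK d = w.lastK .fwd := by
  show w.lastK k = _
  exact lastK_congr w hne k .fwd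

lemma firstK_mem {x y : V} (w : W G x y) (hne : 0 < w.ks.length) : w.firstK ∈ w.ks := by
  cases w with
  | nil => simp [ks] at hne
  | cons k h w' => simp [firstK, ks]

end W

open W

lemma jc_noncoll {Z A : Set V} {v : V} {kl kr : EKind} (hv : v ∉ Z)
    (h : kl.aR = false ∨ kr.aL = false) : JC Z A v kl kr := by
  refine jc_intro (fun h1 h2 => ?_) (fun _ => hv)
  rcases h with h | h <;> simp_all

/-- A directed walk avoiding `Z` entirely. -/
lemma dirwalk {Z : Set V} {a c : V} (han : G.Ancestor a c) :
    a ≠ c → a ∉ G.AnSet Z →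
    ∃ w : W G a c, W.PairsFrom (JC Z (G.AnSet Z)) .fwd w ∧ 0 < w.ks.length ∧
      (∀ k ∈ w.ks, k = .fwd) := by
  induction han using Relation.ReflTransGen.head_induction_on with
  | refl => intro hne _; exact absurd rfl hne
  | head hd hrt ih =>
      rename_i a m
      intro hne hA
      have haZ : a ∉ Z := fun h => hA (subset_anSet Z h)
      by_cases hmc : m = c
      · subst hmc
        exact ⟨.cons .fwd hd (.nil _), ⟨jc_noncoll haZ (by simp [EKind.aL]), trivial⟩,
          by simp [W.ks], by simp [W.ks]⟩
      · have hmA : m ∉ G.AnSet Z := fun h => hA (anSet_closed (Relation.ReflTransGen.single hd) h)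
        obtain ⟨w', hw', hlen', hks'⟩ := ih hmc hmA
        refine ⟨.cons .fwd hd w', ?_, by simp [W.ks], ?_⟩
        · exact ⟨jc_noncoll haZ (by simp [EKind.aL]), hw'⟩
        · intro k hk
          replace hk : k = .fwd ∨ k ∈ w'.ks := List.mem_cons.1 hk
          rcases hk with rfl | hk
          · rfl
          · exact hks' k hk

lemma first_arrow {Q : V → EKind → EKind → Prop} (hAc : G.Acyclic) {u v : V}
    (w : W G u v) (hp : W.Pairs Q w) (hnd : w.vs.Nodup) (hne : 0 < w.ks.length)
    (hQ : ∀ m kl kr, Q m kl kr → G.Ancestor m u ∨ G.Ancestor m v) :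
    w.firstK.aL = true ∨ G.Ancestor u v := by
  cases w with
  | nil => simp [W.ks] at hne
  | cons k h w' =>
      by_cases hk : k.aL = true
      · exact Or.inl hk
      have hkf : k = .fwd := by cases k <;> simp [EKind.aL] at hk ⊢
      subst hkf
      cases w' with
      | nil => exact Or.inr (Relation.ReflTransGen.single h)
      | cons k2 h2 w'' =>
          rw [pairs_cons, pairsFrom_cons] at hp
          rcases hQ _ _ _ hp.1 with hmu | hmv
          · exfalso
            rename_i m _
            have : u = m := hAc u m (Relation.ReflTransGen.single h) hmu
            rw [vs_cons, List.nodup_cons] at hnd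
            exact hnd.1 (this ▸ (W.cons k2 h2 w'').vs_first_mem)
          · exact Or.inr (Relation.ReflTransGen.head h hmv)

lemma last_arrow {Q : V → EKind → EKind → Prop} (hAc : G.Acyclic) {u v : V}
    (w : W G u v) (hp : W.Pairs Q w) (hnd : w.vs.Nodup) (hne : 0 < w.ks.length)
    (hQ : ∀ m kl kr, Q m kl kr → G.Ancestor m u ∨ G.Ancestor m v) :
    (w.lastK .fwd).aR = true ∨ G.Ancestor v u := by
  have hrev : W.Pairs (fun m kl kr => Q m kr.flip kl.flip) w.reverse := by
    rw [pairs_reverse]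
    exact pairs_mono (fun m kl kr hq => by simpa using hq) hp
  have := first_arrow hAc w.reverse hrev
    (by rw [vs_reverse]; exact (List.nodup_reverse).2 hnd) (by rwa [ks_length_reverse])
    (fun m kl kr hq => (hQ m _ _ hq).symm)
  rw [firstK_reverse w hne] at this
  simpa using this

/-- Core construction: from an inducing-style walk, an m-connecting walk given any
`Z`, with controlled end marks. -/
lemma CAcore {Z : Set V} (hAc : G.Acyclic) (a₀ : V) :
    ∀ {c b : V} (w : W G c b), 0 < w.ks.length → w.vs.Nodup → a₀ ∉ w.vs.tail →
      W.Pairs (IndP G a₀ b) w →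
      ((w.lastK .fwd).aR = true ∨ G.Ancestor b a₀) →
      ((∃ τ : W G c b, W.Pairs (JC Z (G.AnSet Z)) τ ∧ 0 < τ.ks.length ∧
          ((τ.lastK .fwd).aR = true ∨ G.Ancestor b a₀) ∧ τ.firstK = w.firstK) ∨
       (∃ τ : W G a₀ b, W.Pairs (JC Z (G.AnSet Z)) τ ∧ 0 < τ.ks.length ∧
          ((τ.lastK .fwd).aR = true ∨ G.Ancestor b a₀) ∧ τ.firstK.aL = true))
  | c, b, .cons k h (W.nil _), _, hnd, ha₀, hp, hend => by
      exact Or.inl ⟨.cons k h (.nil _), trivial, by simp [W.ks], hend, rfl⟩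
  | c, b, .cons (y := m) k h (W.cons (y := m2) k2 h2 w''), _, hnd, ha₀, hp, hend => by
      rw [pairs_cons, pairsFrom_cons] at hp
      obtain ⟨⟨⟨hkR, hk2L⟩, hman⟩, hrest⟩ := hp
      have hnd' : (W.cons k2 h2 w'').vs.Nodup := by
        rw [vs_cons, List.nodup_cons] at hnd; exact hnd.2
      have ha₀' : a₀ ∉ (W.cons k2 h2 w'').vs.tail := by
        intro hmem
        exact ha₀ (by rw [vs_cons, List.tail_cons, vs_cons]; exact List.mem_cons_of_mem _ hmem)
      have hend' : (((W.cons k2 h2 w'')).lastK .fwd).aR = true ∨ G.Ancestor b a₀ := by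
        rcases hend with hl | hr
        · left
          rwa [lastK_cons k h _ (by simp [W.ks])] at hl
        · exact Or.inr hr
      have hrest' : W.Pairs (IndP G a₀ b) (W.cons k2 h2 w'') := hrest
      have hmb : m ≠ b := by
        rw [vs_cons, List.nodup_cons, vs_cons, List.nodup_cons] at hnd
        intro he
        subst he
        exact hnd.2.1 w''.vs_last_mem
      by_cases hmA : m ∈ G.AnSet Z
      · -- keep the edge, recurse
        rcases CAcore hAc a₀ (W.cons k2 h2 w'') (by simp [W.ks]) hnd' ha₀' hrest' hend' with
          ⟨τ', hτ', hlen', hend'', hfirst'⟩ | hinr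
        · refine Or.inl ⟨.cons k h τ', ?_, by simp [W.ks], ?_, rfl⟩
          · rw [pairs_cons]
            cases τ' with
            | nil => simp [W.ks] at hlen'
            | cons k2' h2' τ'' =>
                rw [pairsFrom_cons]
                refine ⟨?_, hτ'⟩
                have : k2' = k2 := hfirst'
                subst this
                exact jc_intro (fun _ _ => hmA) (fun hn => absurd ⟨hkR, hk2L⟩ hn)
          · rcases hend'' with hl | hr
            · left
              rwa [lastK_cons k h τ' hlen']
            · exact Or.inr hr
        · exact Or.inr hinr
      · have hmZ : m ∉ Z := fun hz => hmA (subset_anSet Z hz)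
        by_cases hmbAn : G.Ancestor m b
        · -- shortcut down to b
          obtain ⟨dw, hdw, hdwlen, hdwks⟩ := dirwalk hmbAn hmb hmA
          refine Or.inl ⟨.cons k h dw, ?_, by simp [W.ks], ?_, rfl⟩
          · rw [pairs_cons]
            cases dw with
            | nil => simp [W.ks] at hdwlen
            | cons kd hd dw' =>
                have hkd : kd = .fwd := hdwks kd (by simp [W.ks])
                subst hkd
                rw [pairsFrom_cons] at hdw ⊢
                exact ⟨jc_noncoll hmZ (by simp [EKind.aL]), hdw.2⟩
          · left
            rw [lastK_cons k h dw hdwlen]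
            rw [show dw.lastK .fwd = .fwd from hdwks _ (lastK_mem dw .fwd hdwlen)]
            rfl
        · -- m is an ancestor of a₀: restart from a₀
          have hma₀ : G.Ancestor m a₀ := hman.resolve_right hmbAn
          have hma₀ne : m ≠ a₀ := by
            intro he
            exact ha₀ (by rw [vs_cons, List.tail_cons, ← he]; exact (W.cons k2 h2 w'').vs_first_mem)
          obtain ⟨dw, hdw, hdwlen, hdwks⟩ := dirwalk hma₀ hma₀ne hmA
          rcases CAcore hAc a₀ (W.cons k2 h2 w'') (by simp [W.ks]) hnd' ha₀' hrest' hend' with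
            ⟨τ', hτ', hlen', hend'', hfirst'⟩ | hinr
          · have hrdwlen : 0 < dw.reverse.ks.length := by rwa [ks_length_reverse]
            refine Or.inr ⟨dw.reverse.append τ', ?_, ?_, ?_, ?_⟩
            · rw [pairs_append_nonempty _ _ hrdwlen]
              constructor
              · rw [pairs_reverse]
                exact pairs_mono (fun v kl kr hj => jc_flip hj) (pairs_of_pairsFrom hdw)
              · have hlk : dw.reverse.lastK .fwd = .bwd := by
                  rw [lastK_reverse dw .fwd hdwlen]
                  rw [show dw.firstK = .fwd from hdwks _ (firstK_mem dw hdwlen)]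
                  rfl
                rw [hlk]
                cases τ' with
                | nil => simp [W.ks] at hlen'
                | cons k2' h2' τ'' =>
                    rw [pairsFrom_cons]
                    exact ⟨jc_noncoll hmZ (Or.inl rfl), hτ'⟩
            · rw [ks_append]; simp only [List.length_append]; omega
            · rcases hend'' with hl | hr
              · left; rwa [lastK_append _ _ _ (by simpa [W.ks] using hlen')]
              · exact Or.inr hr
            · rw [firstK_append _ _ hrdwlen]
              rw [firstK_reverse dw hdwlen]
              rw [show dw.lastK .fwd = .fwd from hdwks _ (lastK_mem dw .fwd hdwlen)]
              rfl
          · exact Or.inr hinr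

/-- From an inducing path: an m-connecting walk given any `Z`, with arrowheads at
non-ancestral endpoints. -/
lemma ca_of_inducing {Z : Set V} (hAc : G.Acyclic) {a b : V} (hab : a ≠ b)
    (p : G.Path a b) (hInd : p.Inducing) :
    ∃ τ : W G a b, W.Pairs (JC Z (G.AnSet Z)) τ ∧ 0 < τ.ks.length ∧
      (¬ G.Ancestor b a → (τ.lastK .fwd).aR = true) ∧
      (¬ G.Ancestor a b → τ.firstK.aL = true) := by
  obtain ⟨w, hv, hk⟩ := walk_of_path p
  have hpairs : W.Pairs (IndP G a b) w := (inducing_iff_pairs p w hv hk).1 hInd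
  have hnd : w.vs.Nodup := by rw [hv]; exact p.nodup
  have hne : 0 < w.ks.length := by
    cases w with
    | nil => exact absurd rfl hab
    | cons k h w' => simp [W.ks]
  have hQ : ∀ m kl kr, IndP G a b m kl kr → G.Ancestor m a ∨ G.Ancestor m b :=
    fun m kl kr hq => hq.2
  have ha₀ : a ∉ w.vs.tail := by
    cases w with
    | nil => simp [W.ks] at hne
    | cons k h w' =>
        rw [vs_cons, List.nodup_cons] at hnd
        simpa using hnd.1
  have hend := last_arrow hAc w hpairs (by rw [hv]; exact p.nodup) hne hQ
  have hfirst := first_arrow hAc w hpairs (by rw [hv]; exact p.nodup) hne hQ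
  rcases CAcore hAc a w hne hnd ha₀ hpairs hend with
    ⟨τ, hτ, hlen, hend', hfirst'⟩ | ⟨τ, hτ, hlen, hend', hfirst'⟩
  · refine ⟨τ, hτ, hlen, fun hba => ?_, fun hab' => ?_⟩
    · exact hend'.resolve_right hba
    · rw [hfirst']
      exact hfirst.resolve_right hab'
  · exact ⟨τ, hτ, hlen, fun hba => hend'.resolve_right hba, fun _ => hfirst'⟩

/-- From a virtual adjacency: an m-connecting walk given any `Z`, with arrowheads at
non-ancestral endpoints. -/
lemma ca_walk {S : MGraph V} {Z : Set V} (hAc : S.Acyclic) {a c : V} (hvadj : S.VAdj a c) :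
    ∃ τ : W S a c, W.Pairs (JC Z (S.AnSet Z)) τ ∧ 0 < τ.ks.length ∧
      (¬ S.Ancestor c a → (τ.lastK .fwd).aR = true) ∧
      (¬ S.Ancestor a c → τ.firstK.aL = true) := by
  obtain ⟨hne, hp | hp⟩ := hvadj
  · obtain ⟨p, hInd⟩ := hp
    exact ca_of_inducing hAc hne p hInd
  · obtain ⟨p, hInd⟩ := hp
    obtain ⟨τ', hτ', hlen', he1, he2⟩ := ca_of_inducing hAc (Ne.symm hne) p hInd
    refine ⟨τ'.reverse, ?_, by rwa [ks_length_reverse], ?_, ?_⟩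
    · rw [pairs_reverse]
      exact pairs_mono (fun v kl kr hj => jc_flip hj) hτ'
    · intro hca
      rw [lastK_reverse τ' .fwd hlen']
      rw [EKind.aR_flip]
      exact he2 hca
    · intro hac
      rw [firstK_reverse τ' hlen']
      rw [EKind.aL_flip]
      exact he1 hac

end MGraph

namespace MGraph

variable {V : Type} {S : MGraph V}

open W

lemma acyclic_not_anc_rev (hAc : S.Acyclic) {a c : V} (h : S.Ancestor a c) (hne : a ≠ c) :
    ¬ S.Ancestor c a := fun hca => hne (hAc a c h hca)

/-- Replacement of a single mag edge by an m-connecting walk in `S` with compatible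
end marks. -/
lemma dir2_piece (hAc : S.Acyclic) {Z : Set V} {a c : V} {k : EKind}
    (h : S.mag.edgeKind k a c) :
    ∃ τ : W S a c, W.Pairs (JC Z (S.AnSet Z)) τ ∧ 0 < τ.ks.length ∧
      (k.aL = true → τ.firstK.aL = true) ∧
      (τ.firstK.aL = true → k.aL = true ∨ a ∈ S.AnSet Z) ∧
      (k.aR = true → (τ.lastK .fwd).aR = true) ∧
      ((τ.lastK .fwd).aR = true → k.aR = true ∨ c ∈ S.AnSet Z) := by
  cases k with
  | fwd =>
      obtain ⟨hvadj, han⟩ := h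
      have hne : a ≠ c := hvadj.1
      have hnca : ¬ S.Ancestor c a := acyclic_not_anc_rev hAc han hne
      by_cases hA : a ∈ S.AnSet Z
      · obtain ⟨τ, hτ, hlen, he1, _⟩ := ca_walk (Z := Z) hAc hvadj
        exact ⟨τ, hτ, hlen, by simp [EKind.aL], fun _ => Or.inr hA,
          fun _ => he1 hnca, fun _ => Or.inl rfl⟩
      · obtain ⟨dw, hdw, hlen, hks⟩ := dirwalk han hne hA
        refine ⟨dw, pairs_of_pairsFrom hdw, hlen, by simp [EKind.aL], ?_, ?_, fun _ => Or.inl rfl⟩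
        · rw [show dw.firstK = .fwd from hks _ (firstK_mem dw hlen)]
          simp [EKind.aL]
        · intro _
          rw [show dw.lastK .fwd = .fwd from hks _ (lastK_mem dw .fwd hlen)]
          simp [EKind.aR]
  | bwd =>
      obtain ⟨hvadj, han⟩ := h
      have hne : c ≠ a := hvadj.1
      have hnac : ¬ S.Ancestor a c := acyclic_not_anc_rev hAc han hne
      by_cases hA : c ∈ S.AnSet Z
      · obtain ⟨τ, hτ, hlen, _, he2⟩ := ca_walk (Z := Z) hAc (vadj_symm hvadj)
        exact ⟨τ, hτ, hlen, fun _ => he2 hnac, fun _ => Or.inl rfl,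
          by simp [EKind.aR], fun _ => Or.inr hA⟩
      · obtain ⟨dw, hdw, hlen, hks⟩ := dirwalk han hne hA
        have hrlen : 0 < dw.reverse.ks.length := by rwa [ks_length_reverse]
        refine ⟨dw.reverse, ?_, hrlen, ?_, fun _ => Or.inl rfl, by simp [EKind.aR], ?_⟩
        · rw [pairs_reverse]
          exact pairs_mono (fun v kl kr hj => jc_flip hj) (pairs_of_pairsFrom hdw)
        · intro _
          rw [firstK_reverse dw hlen,
            show dw.lastK .fwd = .fwd from hks _ (lastK_mem dw .fwd hlen)]
          rfl
        · intro hcontra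
          rw [lastK_reverse dw .fwd hlen,
            show dw.firstK = .fwd from hks _ (firstK_mem dw hlen)] at hcontra
          simp [EKind.flip, EKind.aR] at hcontra
  | bi =>
      obtain ⟨hvadj, hnac, hnca⟩ := h
      obtain ⟨τ, hτ, hlen, he1, he2⟩ := ca_walk (Z := Z) hAc hvadj
      exact ⟨τ, hτ, hlen, fun _ => he2 hnac, fun _ => Or.inl rfl,
        fun _ => he1 hnca, fun _ => Or.inl rfl⟩

/-- Translation of an m-connecting walk in the MAG into one in `S`. -/
lemma dir2 (hAc : S.Acyclic) {Z : Set V} :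
    ∀ {a b : V} (ω : W S.mag a b), W.Pairs (JC Z (S.AnSet Z)) ω →
    ∃ τ : W S a b, W.Pairs (JC Z (S.AnSet Z)) τ ∧
      (0 < ω.ks.length → 0 < τ.ks.length ∧
        (τ.firstK.aL = true → ω.firstK.aL = true ∨ a ∈ S.AnSet Z) ∧
        (ω.firstK.aL = true → τ.firstK.aL = true))
  | a, _, .nil _, _ => ⟨.nil a, trivial, by simp [W.ks]⟩
  | a, _, .cons (y := c) k h (W.nil _), hp => by
      obtain ⟨τ, hτ, hlen, h1, h2, _, _⟩ := dir2_piece hAc (Z := Z) h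
      exact ⟨τ, hτ, fun _ => ⟨hlen, h2, h1⟩⟩
  | a, b, .cons (y := c) k h (W.cons (y := e) k2 h2 ω''), hp => by
      rw [pairs_cons, pairsFrom_cons] at hp
      obtain ⟨hj, hrest⟩ := hp
      obtain ⟨τ₀, hτ₀, hlen₀, p1, p2, p3, p4⟩ := dir2_piece hAc (Z := Z) h
      obtain ⟨τ', hτ', hspec⟩ := dir2 hAc (W.cons k2 h2 ω'') hrest
      obtain ⟨hlen', s1, s2⟩ := hspec (by simp [W.ks])
      refine ⟨τ₀.append τ', ?_, ?_⟩
      · rw [pairs_append_nonempty _ _ hlen₀]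
        refine ⟨hτ₀, ?_⟩
        cases τ' with
        | nil => simp [W.ks] at hlen'
        | cons k2' h2' τ'' =>
            rw [pairsFrom_cons]
            refine ⟨?_, hτ'⟩
            refine jc_intro (fun hR hL => ?_) (fun hn => ?_)
            · rcases p4 hR with hkR | hcA
              · rcases s1 hL with hk2L | hcA
                · exact jc_coll hj hkR hk2L
                · exact hcA
              · exact hcA
            · rcases Decidable.not_and_iff_or_not.1 hn with hn1 | hn2
              · refine jc_non hj (fun hc => hn1 (p3 hc.1))
              · refine jc_non hj (fun hc => hn2 (s2 hc.2))
      · intro _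
        refine ⟨by rw [ks_append]; simp only [List.length_append]; omega, ?_, ?_⟩
        · rw [firstK_append _ _ hlen₀]
          exact p2
        · rw [firstK_append _ _ hlen₀]
          exact p1

lemma conn_mag_to_S (hAc : S.Acyclic) {Z : Set V} {x y : V}
    (h : Conn S.mag Z x y) : Conn S Z x y := by
  obtain ⟨ω, hω⟩ := h
  have hω' : W.Pairs (JC Z (S.AnSet Z)) ω :=
    pairs_mono (fun v kl kr hj => jc_mono (le_of_eq (mag_anSet_eq Z)) hj) hω
  obtain ⟨τ, hτ, _⟩ := dir2 hAc ω hω'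
  exact ⟨τ, hτ⟩

end MGraph

namespace MGraph

variable {V : Type} {S : MGraph V}

open W

/-- A "segment": a nonempty duplicate-free walk in `S` all of whose interior vertices
are colliders in `Z` that are ancestors of an endpoint (an inducing path in `Z`). -/
def SegP (S : MGraph V) (Z : Set V) (u v : V) (w : W S u v) : Prop :=
  0 < w.ks.length ∧ w.vs.Nodup ∧
    W.Pairs (fun m kl kr => (kl.aR = true ∧ kr.aL = true) ∧ m ∈ Z ∧
      (S.Ancestor m u ∨ S.Ancestor m v)) w

lemma segP_ne {Z : Set V} {u v : V} {w : W S u v} (h : SegP S Z u v w) : u ≠ v :=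
  ne_of_nodup w h.2.1 h.1

lemma segP_vadj {Z : Set V} {u v : V} {w : W S u v} (h : SegP S Z u v w) : S.VAdj u v := by
  refine ⟨segP_ne h, Or.inl ⟨w.toPath h.2.1, ?_⟩⟩
  rw [inducing_iff_pairs _ w rfl rfl]
  exact pairs_mono (fun m kl kr hm => ⟨hm.1, hm.2.2⟩) h.2.2

lemma segP_last_arrow {Z : Set V} (hAc : S.Acyclic) {u v : V} {w : W S u v}
    (h : SegP S Z u v w) (hvu : ¬ S.Ancestor v u) : (w.lastK .fwd).aR = true :=
  (last_arrow hAc w h.2.2 h.2.1 h.1 (fun m kl kr hm => hm.2.2)).resolve_right hvu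

lemma segP_first_arrow {Z : Set V} (hAc : S.Acyclic) {u v : V} {w : W S u v}
    (h : SegP S Z u v w) (huv : ¬ S.Ancestor u v) : w.firstK.aL = true :=
  (first_arrow hAc w h.2.2 h.2.1 h.1 (fun m kl kr hm => hm.2.2)).resolve_right huv

/-- The canonical kind of the MAG edge between virtually adjacent vertices. -/
def KOK (S : MGraph V) (u v : V) (k : EKind) : Prop :=
  S.mag.edgeKind k u v ∧ (k.aL = true ↔ ¬ S.Ancestor u v) ∧ (k.aR = true ↔ ¬ S.Ancestor v u)

lemma kok_exists (hAc : S.Acyclic) {u v : V} (h : S.VAdj u v) : ∃ k, KOK S u v k := by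
  by_cases h1 : S.Ancestor u v
  · refine ⟨.fwd, ⟨h, h1⟩, by simp [EKind.aL, h1], ?_⟩
    simp only [EKind.aR, true_iff]
    exact acyclic_not_anc_rev hAc h1 h.1
  by_cases h2 : S.Ancestor v u
  · refine ⟨.bwd, ⟨vadj_symm h, h2⟩, by simp [EKind.aL, h1], by simp [EKind.aR, h2]⟩
  · exact ⟨.bi, ⟨h, h1, h2⟩, by simp [EKind.aL, h1], by simp [EKind.aR, h2]⟩

lemma junction_of_pairs {G : MGraph V} {P : V → EKind → EKind → Prop} {u v t : V}
    {w1 : W G u v} {w2 : W G v t} (hp : W.Pairs P (w1.append w2))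
    (h1 : 0 < w1.ks.length) (h2 : 0 < w2.ks.length) :
    P v (w1.lastK .fwd) w2.firstK := by
  cases w2 with
  | nil => simp [W.ks] at h2
  | cons k2 h2' w2' =>
      have := ((pairs_append_nonempty w1 _ h1).1 hp).2
      rw [pairsFrom_cons] at this
      exact this.1

lemma seg_fuse {Z : Set V} {u v t : V} {w₁ : W S u v} {w₂ : W S v t}
    (hseg1 : SegP S Z u v w₁) (hseg2 : SegP S Z v t w₂) (hv : v ∈ Z)
    (hvan : S.Ancestor v u ∨ S.Ancestor v t)
    (harr1 : (w₁.lastK .fwd).aR = true) (harr2 : w₂.firstK.aL = true)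
    (hnd : (w₁.append w₂).vs.Nodup) : SegP S Z u t (w₁.append w₂) := by
  refine ⟨by rw [ks_append]; simp only [List.length_append]; have := hseg1.1; omega, hnd, ?_⟩
  rw [pairs_append_nonempty _ _ hseg1.1]
  constructor
  · refine pairs_mono (fun m kl kr hm => ⟨hm.1, hm.2.1, ?_⟩) hseg1.2.2
    rcases hm.2.2 with h | h
    · exact Or.inl h
    · rcases hvan with h' | h'
      · exact Or.inl (h.trans h')
      · exact Or.inr (h.trans h')
  · cases w₂ with
    | nil => have := hseg2.1; simp [W.ks] at this
    | cons k2 h2 w2' =>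
        rw [pairsFrom_cons]
        constructor
        · exact ⟨⟨harr1, harr2⟩, hv, hvan⟩
        · refine pairsFrom_mono (fun m kl kr hm => ⟨hm.1, hm.2.1, ?_⟩) hseg2.2.2
          rcases hm.2.2 with h | h
          · rcases hvan with h' | h'
            · exact Or.inl (h.trans h')
            · exact Or.inr (h.trans h')
          · exact Or.inr h

/-- The translated walk specification: the MAG walk is built from segments of the
original walk, with valid junctions. -/
inductive TS (S : MGraph V) (Z : Set V) : ∀ {a y : V}, W S a y → W S.mag a y → Prop
  | nil (a : V) : TS S Z (W.nil a) (W.nil a)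
  | step {a v y : V} (w₁ : W S a v) (w₂ : W S v y) (k : EKind)
      (hseg : SegP S Z a v w₁) (hk : KOK S a v k) (σ' : W S.mag v y)
      (hrec : TS S Z w₂ σ')
      (hj : 0 < σ'.ks.length → JC Z (S.AnSet Z) v k σ'.firstK) :
      TS S Z (w₁.append w₂) (W.cons k hk.1 σ')

lemma ts_good {Z : Set V} {a y : V} {w : W S a y} {σ : W S.mag a y}
    (h : TS S Z w σ) : W.Pairs (JC Z (S.AnSet Z)) σ := by
  induction h with
  | nil a => trivial
  | step w₁ w₂ k hseg hk σ' hrec hj ih =>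
      rw [pairs_cons]
      cases σ' with
      | nil => trivial
      | cons k2 h2 σ'' =>
          rw [pairsFrom_cons]
          exact ⟨hj (by simp [W.ks]), ih⟩

lemma fix (hAc : S.Acyclic) {Z : Set V} :
    ∀ {v y : V} {w₂ : W S v y} {σ' : W S.mag v y}, TS S Z w₂ σ' →
    ∀ {u : V} (w₁ : W S u v), SegP S Z u v w₁ →
      W.Pairs (JC Z (S.AnSet Z)) (w₁.append w₂) → (w₁.append w₂).vs.Nodup →
      ∃ σ : W S.mag u y, TS S Z (w₁.append w₂) σ := by
  intro v y w₂ σ' hTS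
  induction hTS with
  | nil a =>
      intro u w₁ hseg hGood hnd
      obtain ⟨k, hk⟩ := kok_exists hAc (segP_vadj hseg)
      exact ⟨_, TS.step w₁ (W.nil _) k hseg hk (W.nil _) (TS.nil _)
        (by intro h; simp [W.ks] at h)⟩
  | step w₂₁ w₂₂ k₂ hseg₂ hk₂ σ'' hrec hj ih =>
      intro u w₁ hseg hGood hnd
      rename_i vj vm yend
      -- w₁ : W S u vj, w₂₁ : W S vj vm, w₂₂ : W S vm yend, σ' = cons k₂ σ''
      obtain ⟨k₁, hk₁⟩ := kok_exists hAc (segP_vadj hseg)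
      have hw2len : 0 < (w₂₁.append w₂₂).ks.length := by
        rw [ks_append]; simp only [List.length_append]; have := hseg₂.1; omega
      by_cases hfuse : vj ∈ Z ∧ (S.Ancestor vj u ∨ S.Ancestor vj vm)
      · -- fuse the two segments
        have hnd' : ((w₁.append w₂₁).append w₂₂).vs.Nodup := by
          rwa [append_assoc]
        have hGood' : W.Pairs (JC Z (S.AnSet Z)) ((w₁.append w₂₁).append w₂₂) := by
          rwa [append_assoc]
        have hjunc := junction_of_pairs hGood hseg.1 hw2len
        rw [firstK_append _ _ hseg₂.1] at hjunc
        have harr := jc_arrows_of_mem hjunc hfuse.1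
        have hseg' : SegP S Z u vm (w₁.append w₂₁) :=
          seg_fuse hseg hseg₂ hfuse.1 hfuse.2 harr.1 harr.2
            (by
              have h2 : ((w₁.append w₂₁).append w₂₂).vs.Nodup := hnd'
              rw [vs_append] at h2
              exact h2.of_append_left)
        obtain ⟨σ, hσ⟩ := ih (w₁.append w₂₁) hseg' hGood' hnd'
        rw [← append_assoc]
        exact ⟨σ, hσ⟩
      · -- emit a separate edge
        refine ⟨_, TS.step w₁ (w₂₁.append w₂₂) k₁ hseg hk₁ (W.cons k₂ hk₂.1 σ'')
          (TS.step w₂₁ w₂₂ k₂ hseg₂ hk₂ σ'' hrec hj) (fun _ => ?_)⟩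
        show JC Z (S.AnSet Z) vj k₁ k₂
        refine jc_intro (fun hR hL => ?_) (fun hn => ?_)
        · -- both arrowheads at the junction: it was a collider in the source walk
          have hnvu : ¬ S.Ancestor vj u := hk₁.2.2.1 hR
          have hnvv₁ : ¬ S.Ancestor vj vm := hk₂.2.1.1 hL
          have ha1 := segP_last_arrow hAc hseg hnvu
          have ha2 := segP_first_arrow hAc hseg₂ hnvv₁
          have hjunc := junction_of_pairs hGood hseg.1 hw2len
          rw [firstK_append _ _ hseg₂.1] at hjunc
          exact jc_coll hjunc ha1 ha2
        · -- a tail at the junction: the vertex is not in Z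
          intro hvz
          refine hfuse ⟨hvz, ?_⟩
          rcases Decidable.not_and_iff_or_not.1 hn with h1 | h2
          · left
            by_contra hcon
            exact h1 (hk₁.2.2.2 hcon)
          · right
            by_contra hcon
            exact h2 (hk₂.2.1.2 hcon)

lemma dir1_main (hAc : S.Acyclic) {Z : Set V} :
    ∀ {x y : V} (w : W S x y), W.Pairs (JC Z (S.AnSet Z)) w → w.vs.Nodup →
      ∃ σ : W S.mag x y, TS S Z w σ
  | x, _, .nil _, _, _ => ⟨.nil x, TS.nil x⟩
  | x, y, .cons (y := c) k h w', hp, hnd => by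
      have hnd' : w'.vs.Nodup := by
        rw [vs_cons, List.nodup_cons] at hnd
        exact hnd.2
      obtain ⟨σ', hTS⟩ := dir1_main hAc w' (pairs_of_pairsFrom (hp : W.PairsFrom _ k w')) hnd'
      have hxc : x ≠ c := fun he => edgeKind_ne (he ▸ h)
      have hseg : SegP S Z x c (W.cons k h (W.nil c)) :=
        ⟨by simp [W.ks], by simp [W.vs, hxc], trivial⟩
      exact fix hAc hTS (W.cons k h (W.nil c)) hseg hp hnd

lemma conn_S_to_mag (hAc : S.Acyclic) {Z : Set V} {x y : V}
    (h : Conn S Z x y) : Conn S.mag Z x y := by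
  obtain ⟨w, hw, hnd⟩ := conn_shorten h
  obtain ⟨σ, hσ⟩ := dir1_main hAc w hw hnd
  refine ⟨σ, ?_⟩
  exact pairs_mono (fun v kl kr hj => jc_mono (le_of_eq (mag_anSet_eq Z).symm) hj) (ts_good hσ)

end MGraph

namespace MGraph

variable {V : Type} {G : MGraph V} {S : MGraph V}

namespace W

lemma pairs_and {P Q : V → EKind → EKind → Prop} {x y : V} {w : W G x y}
    (hP : Pairs P w) (hQ : Pairs Q w) :
    Pairs (fun v kl kr => P v kl kr ∧ Q v kl kr) w := by
  cases w with
  | nil => trivial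
  | cons k h w' => exact pairsFrom_and hP hQ

lemma pairsFrom_mem_vs : ∀ {c b : V} (w : W G c b) (k : EKind),
    PairsFrom (fun v _ _ => v ∈ w.vs) k w
  | _, _, .nil _, _ => trivial
  | c, b, .cons k2 h2 w'', k =>
      ⟨by simp [vs], pairsFrom_mono (fun v _ _ hv => by simp [vs, hv])
        (pairsFrom_mem_vs w'' k2)⟩

lemma pairsFrom_ne_last : ∀ {c b : V} (w : W G c b) (k : EKind), w.vs.Nodup →
    PairsFrom (fun v _ _ => v ≠ b) k w
  | _, _, .nil _, _, _ => trivial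
  | c, b, .cons k2 h2 w'', k, hnd => by
      refine ⟨ne_of_nodup (W.cons k2 h2 w'') hnd (by simp [ks]), ?_⟩
      refine pairsFrom_ne_last w'' k2 ?_
      rw [vs_cons, List.nodup_cons] at hnd
      exact hnd.2

lemma pairs_ne_endpoints {x y : V} (w : W G x y) (hnd : w.vs.Nodup) :
    Pairs (fun v _ _ => v ≠ x ∧ v ≠ y) w := by
  cases w with
  | nil => trivial
  | cons k h w' =>
      have hnd' : w'.vs.Nodup := by
        rw [vs_cons, List.nodup_cons] at hnd; exact hnd.2
      have hx : x ∉ w'.vs := by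
        rw [vs_cons, List.nodup_cons] at hnd; exact hnd.1
      have h1 := pairsFrom_ne_last w' k hnd'
      have h2 := pairsFrom_mem_vs w' k
      exact pairsFrom_mono (fun v kl kr hv => ⟨fun he => hx (he ▸ hv.2), hv.1⟩)
        (pairsFrom_and h1 h2)

end W

open W

lemma no_right_tail {Z A B : Set V} {x y : V}
    (hdirA : ∀ a b, G.dir a b → b ∈ A → a ∈ A) (hAB : A ⊆ B)
    (hyB : ∀ c, G.Ancestor c y → c ∈ B)
    (hB : ∀ v, v ∉ Z → v ≠ x → v ≠ y → v ∉ B) :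
    ∀ {c : V} (w : W G c y) (k0 : EKind),
      W.PairsFrom (fun v kl kr => JC Z A v kl kr ∧ v ≠ x ∧ v ≠ y) k0 w →
      W.PairsFrom (fun v kl kr => kr.aL = true) k0 w
  | _, .nil _, _, _ => trivial
  | c, .cons (y := m) k2 h2 w'', k0, hp => by
      obtain ⟨⟨hjc, hcx, hcy⟩, hrest⟩ := hp
      refine ⟨?_, no_right_tail hdirA hAB hyB hB w'' k2 hrest⟩
      by_contra hk2
      have hk2f : k2 = .fwd := by cases k2 <;> simp [EKind.aL] at hk2 ⊢
      subst hk2f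
      have hcZ : c ∉ Z := jc_non hjc (fun hcc => by simp [EKind.aL] at hcc)
      have hcB : c ∉ B := hB c hcZ hcx hcy
      have := chase hdirA (W.cons .fwd h2 w'') rfl (by simp [W.ks])
        (by
          rw [pairs_cons]
          exact pairsFrom_mono (fun v kl kr hv => hv.1) hrest)
      rcases this with hc | ⟨han, _⟩
      · exact hcB (hAB hc)
      · exact hcB (hyB c han)

/-- The canonical separating set for non-virtually-adjacent vertices. -/
def Zstar (S : MGraph V) (x y : V) : Set V :=
  {v | (S.Ancestor v x ∨ S.Ancestor v y) ∧ v ≠ x ∧ v ≠ y}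

lemma zstar_symm (x y : V) : Zstar S x y = Zstar S y x := by
  ext v; simp only [Zstar, Set.mem_setOf_eq]; tauto

lemma zstar_hB {x y : V} :
    ∀ v, v ∉ Zstar S x y → v ≠ x → v ≠ y → v ∉ {v | S.Ancestor v x ∨ S.Ancestor v y} :=
  fun v hz hx hy hmem => hz ⟨hmem, hx, hy⟩

lemma zstar_hAB {x y : V} :
    S.AnSet (Zstar S x y) ⊆ {v | S.Ancestor v x ∨ S.Ancestor v y} := by
  rintro v ⟨d, ⟨hd, -, -⟩, hvd⟩
  rcases hd with h | h
  · exact Or.inl (hvd.trans h)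
  · exact Or.inr (hvd.trans h)

/-- Theorem C: every path m-connecting given `Zstar` is an inducing path. -/
lemma inducing_of_mconn_zstar (hAc : S.Acyclic) {x y : V} (hxy : x ≠ y)
    (p : S.Path x y) (hM : p.MConn (Zstar S x y)) : p.Inducing := by
  obtain ⟨w, hv, hk⟩ := walk_of_path p
  have hp : W.Pairs (JC (Zstar S x y) (S.AnSet (Zstar S x y))) w :=
    (mconn_iff_pairs p w hv hk _).1 hM
  have hnd : w.vs.Nodup := by rw [hv]; exact p.nodup
  set B : Set V := {v | S.Ancestor v x ∨ S.Ancestor v y} with hBdef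
  have hR : W.Pairs (fun v kl kr =>
      JC (Zstar S x y) (S.AnSet (Zstar S x y)) v kl kr ∧ v ≠ x ∧ v ≠ y) w :=
    pairs_and hp (pairs_ne_endpoints w hnd)
  -- no tails pointing right
  have hNR : W.Pairs (fun v kl kr => kr.aL = true) w := by
    cases w with
    | nil => trivial
    | cons k1 h1 w₀ =>
        exact no_right_tail anSet_dir_closed zstar_hAB
          (fun c hc => Or.inr hc) zstar_hB w₀ k1 hR
  -- no tails pointing left, via the reversed walk
  have hRrev : W.Pairs (fun v kl kr =>
      JC (Zstar S y x) (S.AnSet (Zstar S y x)) v kl kr ∧ v ≠ y ∧ v ≠ x) w.reverse := by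
    rw [pairs_reverse]
    refine pairs_mono (fun v kl kr hr => ?_) hR
    rw [zstar_symm y x]
    exact ⟨jc_flip hr.1, hr.2.2, hr.2.1⟩
  have hNLrev : W.Pairs (fun v kl kr => kr.aL = true) w.reverse := by
    cases hw : w.reverse with
    | nil => trivial
    | cons k1 h1 w₀ =>
        have := hRrev
        rw [hw] at this
        exact no_right_tail anSet_dir_closed zstar_hAB
          (fun c hc => Or.inr hc) zstar_hB w₀ k1 this
  have hNL : W.Pairs (fun v kl kr => kl.aR = true) w := by
    have := (pairs_reverse (P := fun v kl kr => kr.aL = true) w).1 hNLrev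
    exact pairs_mono (fun v kl kr hr => by simpa using hr) this
  rw [inducing_iff_pairs p w hv hk]
  have hcomb := pairs_and (pairs_and hNL hNR) hp
  refine pairs_mono (fun v kl kr hr => ?_) hcomb
  obtain ⟨⟨hL, hRr⟩, hjc⟩ := hr
  refine ⟨⟨hL, hRr⟩, ?_⟩
  exact zstar_hAB (jc_coll hjc hL hRr)

lemma x_notin_zstar (x y : V) : x ∉ Zstar S x y := fun h => h.2.1 rfl
lemma y_notin_zstar (x y : V) : y ∉ Zstar S x y := fun h => h.2.2 rfl

lemma msep_transfer (hAc : S.Acyclic) {x y : V} {Z : Set V} :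
    S.mag.MSep x y Z ↔ S.MSep x y Z := by
  rw [msep_iff_not_conn, msep_iff_not_conn]
  constructor
  · rintro ⟨h1, h2, h3, h4⟩
    exact ⟨h1, h2, h3, fun hc => h4 (conn_S_to_mag hAc hc)⟩
  · rintro ⟨h1, h2, h3, h4⟩
    exact ⟨h1, h2, h3, fun hc => h4 (conn_mag_to_S hAc hc)⟩

lemma mag_maximal (hAc : S.Acyclic) {x y : V} (hxy : x ≠ y) (hadj : ¬ S.mag.Adj x y) :
    ∃ Z : Set V, x ∉ Z ∧ y ∉ Z ∧ S.mag.MSep x y Z := by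
  have hnv : ¬ S.VAdj x y := fun h => hadj (adj_mag_iff.2 h)
  refine ⟨Zstar S x y, x_notin_zstar x y, y_notin_zstar x y, ?_⟩
  rw [msep_transfer hAc]
  refine ⟨hxy, x_notin_zstar x y, y_notin_zstar x y, ?_, ?_⟩
  · intro p hp
    exact hnv ⟨hxy, Or.inl ⟨p, inducing_of_mconn_zstar hAc hxy p hp⟩⟩
  · intro p hp
    rw [zstar_symm] at hp
    exact hnv ⟨hxy, Or.inr ⟨p, inducing_of_mconn_zstar hAc hxy.symm p hp⟩⟩

end MGraph


/-- For an SMCM `S` over a finite vertex set, the corresponding graph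
`S.mag` is a MAG, and for all pairwise disjoint `X, Y, Z ⊆ V` with `X, Y` nonempty,
`X` and `Y` are m-separated by `Z` in `S.mag` iff they are m-separated by `Z` in `S`. -/
theorem statement_1 {V : Type} [Fintype V] [DecidableEq V]
    (S : MGraph V) (hS : S.Acyclic) :
    S.mag.IsMAG ∧
    ∀ X Y Z : Set V, X.Nonempty → Y.Nonempty →
      Disjoint X Y → Disjoint X Z → Disjoint Y Z →
      (S.mag.MSepSets X Y Z ↔ S.MSepSets X Y Z) := by
  constructor
  · exact ⟨MGraph.mag_ancestral hS, fun x y hxy hadj => MGraph.mag_maximal hS hxy hadj⟩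
  · intro X Y Z _ _ _ _ _
    constructor
    · intro h a ha b hb
      exact (MGraph.msep_transfer hS).1 (h a ha b hb)
    · intro h a ha b hb
      exact (MGraph.msep_transfer hS).2 (h a ha b hb)
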